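/- Let γ_1,…,γ_m be (ε)-contours at σ in Λ(l), each non-crossing, and let 0 ≤ p ≤ m. Then (1/2)Δ_{γ_1,…,γ_m}H^ω_{Λ(l)}(σ) ≥ (1/2)Δ_{γ_1,…,γ_p}H^ω_{Λ(l)}(σ) + ∑_{j=p+1}^m ((1/2)|γ_j| − |γ_j ∩ ∂Q(Λ(l))|) ≥ (1/2)Δ_{γ_1,…,γ_p}H^ω_{Λ(l)}(σ) ≥ 0. -/

import Mathlib

open Finset

/-! ### Basic lattice notions for the 2-D Ising model on the square Λ(l) -/

abbrev Site := ℤ × ℤ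

/-- `l¹`-distance on `ℤ²`. -/
def d1 (x y : Site) : ℤ := |x.1 - y.1| + |x.2 - y.2|

/-- `l∞`-distance on `ℤ²`. -/
def dinf (x y : Site) : ℤ := max |x.1 - y.1| |x.2 - y.2|

/-- There is a path from `x` to `y` inside `S` with steps of `d`-distance 1. -/
def ChainIn (d : Site → Site → ℤ) (S : Set Site) (x y : Site) : Prop :=
  ∃ L : List Site, L.Chain' (fun a b => d a b = 1) ∧ L.head? = some x ∧
    L.getLast? = some y ∧ ∀ a ∈ L, a ∈ S

/-- `S` is connected with respect to steps of `d`-distance 1. -/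
def ConnIn (d : Site → Site → ℤ) (S : Set Site) : Prop :=
  ∀ x ∈ S, ∀ y ∈ S, ChainIn d S x y

def lamLo (l : ℕ) : ℤ := 1 - (((l + 1) / 2 : ℕ) : ℤ)
def lamHi (l : ℕ) : ℤ := ((l / 2 : ℕ) : ℤ)

/-- The lamBox the box. -/
noncomputable def lamBox (l : ℕ) : Finset Site := Finset.Icc (lamLo l, lamLo l) (lamHi l, lamHi l)

/-- The exterior boundary `∂_ex Λ(l)`. -/
def extBdry (l : ℕ) : Set Site := {y | y ∉ lamBox l ∧ ∃ x ∈ lamBox l, d1 x y = 1}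

/-- An interval of `∂_ex Λ(l)` : an `l∞`-connected subset of it. -/
def IsBdryInterval (l : ℕ) (I : Finset Site) : Prop :=
  (↑I : Set Site) ⊆ extBdry l ∧ ConnIn dinf ↑I

/-- The four nearest neighbours of a site. -/
def nbrs (x : Site) : Finset Site :=
  {(x.1 + 1, x.2), (x.1 - 1, x.2), (x.1, x.2 + 1), (x.1, x.2 - 1)}

/-- A dual bond, recorded by its two endpoints `v`, a dual vertex `v` standing for the
point `v + (1/2, 1/2)` of the dual lattice. -/
abbrev DBond := Sym2 Site

/-- The dual bond of the nearest-neighbour bond `{x, y}`. -/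
def dualBond (x y : Site) : DBond :=
  if x.2 = y.2 then s((min x.1 y.1, x.2 - 1), (min x.1 y.1, x.2))
  else s((x.1 - 1, min x.2 y.2), (x.1, min x.2 y.2))

/-- `∂Q(Θ)` : the set of dual bonds separating `Θ` from its complement. -/
def contourOf (Θ : Finset Site) : Finset DBond :=
  Θ.biUnion fun x => ((nbrs x).filter (· ∉ Θ)).image fun y => dualBond x y

/-- `Θ` and its complement are `l¹`-connected, so that `∂Q(Θ)` is a contour. -/
def IsContourRegion (Θ : Finset Site) : Prop :=
  ConnIn d1 ↑Θ ∧ ConnIn d1 ((↑Θ : Set Site)ᶜ)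

/-- `∂Q(Λ(l))`, as a set of dual bonds. -/
noncomputable def boxBdry (l : ℕ) : Finset DBond := contourOf (lamBox l)

/-- The dual vertex `v` lies on the side `F_l^j` of `Q(Λ(l))` (`j ∈ {1,-1,2,-2}` for
right, left, top, bottom). -/
def onSide (l : ℕ) (j : ℤ) (v : Site) : Prop :=
  (j = 1 ∧ v.1 = lamHi l ∧ lamLo l - 1 ≤ v.2 ∧ v.2 ≤ lamHi l) ∨
  (j = -1 ∧ v.1 = lamLo l - 1 ∧ lamLo l - 1 ≤ v.2 ∧ v.2 ≤ lamHi l) ∨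
  (j = 2 ∧ v.2 = lamHi l ∧ lamLo l - 1 ≤ v.1 ∧ v.1 ≤ lamHi l) ∨
  (j = -2 ∧ v.2 = lamLo l - 1 ∧ lamLo l - 1 ≤ v.1 ∧ v.1 ≤ lamHi l)

/-- The set of dual bonds `γ` meets the side `F_l^j`. -/
def touches (l : ℕ) (j : ℤ) (γ : Finset DBond) : Prop :=
  ∃ e ∈ γ, ∃ v : Site, v ∈ e ∧ onSide l j v

def HorizCrossing (l : ℕ) (γ : Finset DBond) : Prop := touches l 1 γ ∧ touches l (-1) γ
def VertCrossing (l : ℕ) (γ : Finset DBond) : Prop := touches l 2 γ ∧ touches l (-2) γ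

/-- `γ` is neither horizontally nor vertically crossing. -/
def NonCrossing (l : ℕ) (γ : Finset DBond) : Prop :=
  ¬ (HorizCrossing l γ ∨ VertCrossing l γ)

/-- Two dual bonds are adjacent if they share a dual vertex. -/
def DAdj (a b : DBond) : Prop := ∃ v : Site, v ∈ a ∧ v ∈ b

/-- A set of dual bonds is connected (via shared dual vertices). -/
def DConn (S : Finset DBond) : Prop :=
  ∀ e ∈ S, ∀ f ∈ S, ∃ L : List DBond, L.Chain' DAdj ∧ L.head? = some e ∧
    L.getLast? = some f ∧ ∀ a ∈ L, a ∈ S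

/-- Dual bonds separating `Θt` from `Λ(l) \ Θt` inside the lamBox. -/
noncomputable def interiorBdry (l : ℕ) (Θt : Finset Site) : Finset DBond :=
  Θt.biUnion fun x => ((nbrs x).filter fun y => y ∈ lamBox l ∧ y ∉ Θt).image fun y => dualBond x y

/-- The sites of `Λ(l)` along the side `F_l^j`. -/
def sideSites (l : ℕ) (j : ℤ) (x : Site) : Prop :=
  x ∈ lamBox l ∧ ((j = 1 ∧ x.1 = lamHi l) ∨ (j = -1 ∧ x.1 = lamLo l) ∨
    (j = 2 ∧ x.2 = lamHi l) ∨ (j = -2 ∧ x.2 = lamLo l))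

/-- The data of the distinguished connected component `γ̲ = γu` of `γ \ ∂Q(Λ(l))` and of the
region `Θ̃ = Θt` into which a non-crossing contour `γ = ∂Q(Θ)` divides the lamBox: `γu` is a
connected component of `γ \ ∂Q(Λ(l))` dividing `Λ(l)` into the `l¹`-connected pieces `Θt` and
`Λ(l) \ Θt`, with `Θ ⊆ Θt` and `F_l^i ∪ F_l^j ⊆ ∂Q(Λ(l) \ Θt)` for untouched sides `i, j`. -/
def UnderlineData (l : ℕ) (Θ : Finset Site) (γu : Finset DBond) (Θt : Finset Site) : Prop :=
  γu ⊆ contourOf Θ \ boxBdry l ∧ DConn γu ∧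
  (∀ e ∈ contourOf Θ \ boxBdry l, e ∉ γu → ∀ f ∈ γu, ¬ DAdj e f) ∧
  Θ ⊆ Θt ∧ Θt ⊆ lamBox l ∧ ConnIn d1 ↑Θt ∧ ConnIn d1 ↑(lamBox l \ Θt) ∧
  interiorBdry l Θt = γu ∧
  ∃ i j : ℤ, (i = 1 ∨ i = -1) ∧ (j = 2 ∨ j = -2) ∧
    ¬ touches l i (contourOf Θ) ∧ ¬ touches l j (contourOf Θ) ∧
    (∀ x, sideSites l i x → x ∉ Θt) ∧ (∀ x, sideSites l j x → x ∉ Θt)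

/-- `γ̄ = ∂Q(Λ(l)) ∩ ∂Q(Θ̃)`. -/
noncomputable def gammaBar (l : ℕ) (Θt : Finset Site) : Finset DBond := boxBdry l ∩ contourOf Θt

/-- `V_ex(γ)` : sites of the exterior boundary attached to dual bonds of `γ`. -/
noncomputable def Vex (l : ℕ) (γ : Finset DBond) : Finset Site :=
  (lamBox l).biUnion fun x => (nbrs x).filter fun y => y ∉ lamBox l ∧ dualBond x y ∈ γ

/-- `T_Θ` : flip the spins in `Θ`. -/
def flipC (Θ : Finset Site) (σ : Site → ℤ) : Site → ℤ :=
  fun x => if x ∈ Θ then -σ x else σ x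

/-- The Ising Hamiltonian `H^ω_{Λ(l)}(σ)` with boundary condition `ω`. -/
noncomputable def Ham (l : ℕ) (ω : Site → ℝ) (σ : Site → ℤ) : ℝ :=
  -(1/2) * ∑ x ∈ lamBox l, ∑ y ∈ (nbrs x).filter (· ∈ lamBox l), ((σ x * σ y : ℤ) : ℝ)
    - ∑ x ∈ lamBox l, ∑ y ∈ (nbrs x).filter (· ∉ lamBox l), (σ x : ℝ) * ω y

/-- `Δ_{γ₁,…,γ_p} H^ω_{Λ(l)}(σ) = H(σ) - H(T_{γ₁}∘⋯∘T_{γ_p} σ)`, the contours being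
recorded by their regions `Θ(γ_j)`. -/
noncomputable def dH (l : ℕ) (ω : Site → ℝ) (Θs : List (Finset Site)) (σ : Site → ℤ) : ℝ :=
  Ham l ω σ - Ham l ω (Θs.foldr flipC σ)

/-- `C` is an (ε)-cluster in `Λ(l)` at `σ` : a maximal `l¹`-connected component of
`{x ∈ Λ(l) : σ_x = ε}`. -/
def IsCluster (l : ℕ) (σ : Site → ℤ) (ε : ℤ) (C : Finset Site) : Prop :=
  C.Nonempty ∧ (∀ x ∈ C, x ∈ lamBox l ∧ σ x = ε) ∧ ConnIn d1 ↑C ∧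
  ∀ y ∈ lamBox l, σ y = ε → (∃ x ∈ C, d1 x y = 1) → y ∈ C

/-- The `l¹`-connected component of `x` within `S`. -/
def l1Comp (S : Set Site) (x : Site) : Set Site := {y | ChainIn d1 S x y}

/-- `C` together with the bounded components of its complement; `∂Q(fill C)` is the outer
boundary of `Q(C)`. -/
def fill (C : Finset Site) : Set Site :=
  ↑C ∪ {x | (l1Comp ((↑C : Set Site)ᶜ) x).Finite}

/-- `Θ` is the region `Θ(γ)` of an (ε)-contour `γ` in `Λ(l)` at `σ`. -/
def IsEContour (l : ℕ) (σ : Site → ℤ) (ε : ℤ) (Θ : Finset Site) : Prop :=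
  ∃ C : Finset Site, IsCluster l σ ε C ∧ (↑Θ : Set Site) = fill C

/-- A dual bond is horizontal. -/
def isHorizD (e : DBond) : Prop := ∃ v w : Site, e = s(v, w) ∧ v.2 = w.2

/-- A dual bond is vertical. -/
def isVertD (e : DBond) : Prop := ∃ v w : Site, e = s(v, w) ∧ v.1 = w.1

open Classical in
/-- The number of horizontal dual bonds in `γ`. -/
noncomputable def horizCount (γ : Finset DBond) : ℕ := (γ.filter isHorizD).card

open Classical in
/-- The number of vertical dual bonds in `γ`. -/
noncomputable def vertCount (γ : Finset DBond) : ℕ := (γ.filter isVertD).card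

/-! ### Glauber dynamics -/

/-- Configurations on a finite `Λ ⊂ ℤ²` (`true` = spin `+1`, `false` = spin `-1`). -/
abbrev Cfg (Λ : Finset Site) := ↥Λ → Bool

/-- The spin value of a Boolean. -/
def spinVal (b : Bool) : ℝ := if b then 1 else -1

/-- The Ising Hamiltonian on a general finite `Λ`. -/
noncomputable def HamG (Λ : Finset Site) (ω : Site → ℝ) (σ : Cfg Λ) : ℝ :=
  -(1/2) * ∑ x : ↥Λ, ∑ y : ↥Λ, (if d1 ↑x ↑y = 1 then spinVal (σ x) * spinVal (σ y) else 0)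
    - ∑ x : ↥Λ, ∑ y ∈ (nbrs ↑x).filter (· ∉ Λ), spinVal (σ x) * ω y

/-- The finite-volume Gibbs measure `μ^ω_Λ` at inverse temperature `β`. -/
noncomputable def gibbs (Λ : Finset Site) (ω : Site → ℝ) (β : ℝ) (σ : Cfg Λ) : ℝ :=
  Real.exp (-β * HamG Λ ω σ) / ∑ τ : Cfg Λ, Real.exp (-β * HamG Λ ω τ)

/-- The mean of `f` under the weights `μ`. -/
noncomputable def meanW (Λ : Finset Site) (μ f : Cfg Λ → ℝ) : ℝ := ∑ σ : Cfg Λ, μ σ * f σ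

/-- `σ^x` : flip the spin at `x`. -/
def flipAt (Λ : Finset Site) (σ : Cfg Λ) (x : ↥Λ) : Cfg Λ := Function.update σ x (!(σ x))

/-- The generator `A^ω_Λ` of the stochastic Ising model with flip rates `q`. -/
noncomputable def genA (Λ : Finset Site) (q : ↥Λ → Cfg Λ → ℝ) (f : Cfg Λ → ℝ) (σ : Cfg Λ) : ℝ :=
  ∑ x : ↥Λ, q x σ * (f (flipAt Λ σ x) - f σ)

/-- The variance `μ(|f - μf|²)`. -/
noncomputable def varW (Λ : Finset Site) (μ f : Cfg Λ → ℝ) : ℝ :=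
  meanW Λ μ (fun σ => |f σ - meanW Λ μ f| ^ 2)

/-- The spectral gap `gap(Λ, ω, β)` : the infimum of the Rayleigh quotients
`-μ(f A f) / μ(|f - μf|²)`. -/
noncomputable def specGap (Λ : Finset Site) (ω : Site → ℝ) (β : ℝ)
    (q : ↥Λ → Cfg Λ → ℝ) : ℝ :=
  sInf { r | ∃ f : Cfg Λ → ℝ, varW Λ (gibbs Λ ω β) f ≠ 0 ∧
    r = (- meanW Λ (gibbs Λ ω β) fun σ => f σ * genA Λ q f σ) / varW Λ (gibbs Λ ω β) f }

/-- The `±1`-spin function of a configuration on `Λ(l)` (`0` outside the lamBox). -/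
noncomputable def toSpin (l : ℕ) (σ : Cfg (lamBox l)) : Site → ℤ :=
  fun x => if h : x ∈ lamBox l then (if σ ⟨x, h⟩ then 1 else -1) else 0

/-- The magnetization at the origin, `μ^ω_{Λ(l)}(σ₀)`. -/
noncomputable def magZero (l : ℕ) (ω : Site → ℝ) (β : ℝ) : ℝ :=
  ∑ σ : Cfg (lamBox l), gibbs (lamBox l) ω β σ * ((toSpin l σ (0, 0) : ℤ) : ℝ)

/-- The favoured sign `ε_{l,ω}`. -/
noncomputable def epsSign (l : ℕ) (ω : Site → ℝ) (β : ℝ) : ℤ :=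
  if 0 ≤ magZero l ω β then 1 else -1

/-- The trap event `Γ_l` : some (ε)-contour `γ` at `σ` meets `∂Q(Λ(l))` and has
`|γ| ≥ 2δ₁ l`. -/
def GammaEvent (l : ℕ) (δ₁ : ℝ) (ε : ℤ) : Set (Cfg (lamBox l)) :=
  {σ | ∃ Θ : Finset Site, IsEContour l (toSpin l σ) ε Θ ∧
    (contourOf Θ ∩ boxBdry l).Nonempty ∧ 2 * δ₁ * l ≤ ((contourOf Θ).card : ℝ)}

open Classical in
/-- The Gibbs probability of an event `S ⊂ Ω_{Λ(l)}`. -/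
noncomputable def probOf (l : ℕ) (ω : Site → ℝ) (β : ℝ) (S : Set (Cfg (lamBox l))) : ℝ :=
  ∑ σ ∈ Finset.univ.filter (· ∈ S), gibbs (lamBox l) ω β σ

/-- Union of the contours of a list of regions. -/
def unionB (L : List (Finset Site)) : Finset DBond :=
  L.foldr (fun Θ s => contourOf Θ ∪ s) ∅

/-- Union of a list of regions. -/
def unionR (L : List (Finset Site)) : Finset Site :=
  L.foldr (· ∪ ·) ∅

/-!
A boundary bond `(x, y)` of a contour region `Θ` (`x ∈ Θ`, `y ∉ Θ` neighbours) is *inner* if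
`y ∈ Λ(l)` and an *exit* otherwise; `γ = ∂Q(Θ)` has one dual bond per boundary bond, and exactly
the exits give the bonds of `γ ∩ ∂Q(Λ(l))`. Across an inner bond `x` lies in the (ε)-cluster and
`y` does not, so `σ_x σ_y = -1`, while `σ_x = ε` on an exit; hence
`(1/2) Δ_γ H = #inner - ∑_exits ε ω_y ≥ #inner - #exits`. A non-crossing contour avoids one
vertical and one horizontal side of the box, and every exit can then be matched injectively with an
inner bond in its row or column, so `#exits ≤ #inner`. This gives
`0 ≤ (1/2)|γ| - |γ ∩ ∂Q(Λ(l))| = (#inner - #exits)/2 ≤ (1/2) Δ_γ H`.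
Distinct contours come from distinct clusters, so flipping one region never changes the spin
product across a boundary bond of another, and the energy differences of several flips add up.
-/

open Relation

lemma mem_nbrs {x y : Site} : y ∈ nbrs x ↔
    y = (x.1 + 1, x.2) ∨ y = (x.1 - 1, x.2) ∨ y = (x.1, x.2 + 1) ∨ y = (x.1, x.2 - 1) := by
  simp [nbrs]

lemma mem_nbrs_comm {x y : Site} : y ∈ nbrs x ↔ x ∈ nbrs y := by
  simp only [mem_nbrs, Prod.ext_iff]; omega

lemma d1_comm (x y : Site) : d1 x y = d1 y x := by
  simp [d1, abs_sub_comm]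

lemma d1_eq_one_of_mem_nbrs {x y : Site} (h : y ∈ nbrs x) : d1 x y = 1 := by
  rcases mem_nbrs.1 h with rfl | rfl | rfl | rfl <;> simp [d1]

@[simp]
lemma mem_lamBox {l : ℕ} {x : Site} :
    x ∈ lamBox l ↔ lamLo l ≤ x.1 ∧ x.1 ≤ lamHi l ∧ lamLo l ≤ x.2 ∧ x.2 ≤ lamHi l := by
  simp [lamBox, Prod.le_def]; tauto

lemma dualBond_eq_dualBond {x y x' y' : Site} (h : y ∈ nbrs x) (h' : y' ∈ nbrs x')
    (he : dualBond x y = dualBond x' y') : (x = x' ∧ y = y') ∨ (x = y' ∧ y = x') := by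
  rcases mem_nbrs.1 h with rfl | rfl | rfl | rfl <;>
  rcases mem_nbrs.1 h' with rfl | rfl | rfl | rfl <;>
  simp [dualBond, eq_sub_iff_add_eq] at he <;> simp only [Prod.ext_iff] at he ⊢ <;> omega

lemma chainIn_iff {d : Site → Site → ℤ} {S : Set Site} {x y : Site} :
    ChainIn d S x y ↔ x ∈ S ∧ ReflTransGen (fun a b => a ∈ S ∧ b ∈ S ∧ d a b = 1) x y := by
  constructor
  · rintro ⟨L, hc, hh, hl, hm⟩
    have hne : L ≠ [] := by rintro rfl; simp at hh
    rw [List.head?_eq_some_head hne, Option.some_inj] at hh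
    rw [List.getLast?_eq_some_getLast hne, Option.some_inj] at hl
    refine ⟨hh ▸ hm _ (List.head_mem hne), hh ▸ hl ▸ ?_⟩
    exact List.relationReflTransGen_of_exists_isChain L
      (List.IsChain.iff_mem.1 hc |>.imp fun a b h => ⟨hm a h.1, hm b h.2.1, h.2.2⟩) hne
  · rintro ⟨hx, h⟩
    obtain ⟨L, hne, hc, hh, hl⟩ := List.exists_isChain_ne_nil_of_relationReflTransGen h
    refine ⟨L, hc.imp fun a b h => h.2.2, by simp [List.head?_eq_some_head hne, hh],
      by simp [List.getLast?_eq_some_getLast hne, hl], ?_⟩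
    exact hc.induction (· ∈ S) L (fun a b h _ => h.2.1) (fun _ => hh ▸ hx)

lemma l1Comp_eq_of_adj {S : Set Site} {x y : Site} (hx : x ∈ S) (hy : y ∈ S) (hxy : d1 x y = 1) :
    l1Comp S x = l1Comp S y := by
  ext z
  simp only [l1Comp, Set.mem_ofPred_eq, chainIn_iff]
  exact ⟨fun h => ⟨hy, .head ⟨hy, hx, d1_comm x y ▸ hxy⟩ h.2⟩,
    fun h => ⟨hx, .head ⟨hx, hy, hxy⟩ h.2⟩⟩

lemma l1Comp_infinite_of_ray {S : Set Site} {x v : Site} (hv : d1 0 v = 1)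
    (hS : ∀ t : ℕ, x + (t : ℤ) • v ∈ S) : (l1Comp S x).Infinite := by
  have hray : ∀ t : ℕ, x + (t : ℤ) • v ∈ l1Comp S x := by
    intro t
    induction t with
    | zero => exact chainIn_iff.2 ⟨by simpa using hS 0, by simpa using ReflTransGen.refl⟩
    | succ t ih =>
      refine chainIn_iff.2 ⟨(chainIn_iff.1 ih).1, .tail (chainIn_iff.1 ih).2 ⟨hS t, hS (t + 1), ?_⟩⟩
      simpa [d1, add_smul, ← sub_sub, abs_sub_comm] using hv
  have hv0 : v ≠ 0 := by rintro rfl; simp [d1] at hv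
  exact Set.infinite_of_injective_forall_mem
    ((add_right_injective x).comp ((smul_left_injective ℤ hv0).comp Nat.cast_injective)) hray

lemma l1Comp_infinite_of_not_mem_lamBox {l : ℕ} {S : Set Site} (hS : ∀ y ∉ lamBox l, y ∈ S)
    {x : Site} (hx : x ∉ lamBox l) : (l1Comp S x).Infinite := by
  obtain ⟨v, hv, hout⟩ : ∃ v : Site, d1 0 v = 1 ∧ ∀ t : ℕ, x + (t : ℤ) • v ∉ lamBox l := by
    simp only [mem_lamBox, not_and_or, not_le] at hx
    rcases hx with h | h | h | h
    · exact ⟨(-1, 0), by simp [d1], fun t => by simp; omega⟩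
    · exact ⟨(1, 0), by simp [d1], fun t => by simp; omega⟩
    · exact ⟨(0, -1), by simp [d1], fun t => by simp; omega⟩
    · exact ⟨(0, 1), by simp [d1], fun t => by simp; omega⟩
  exact l1Comp_infinite_of_ray hv fun t => hS _ (hout t)

lemma subset_fill (C : Finset Site) : (↑C : Set Site) ⊆ fill C := Set.subset_union_left

lemma fill_subset_lamBox {l : ℕ} {C : Finset Site} (hC : ↑C ⊆ (↑(lamBox l) : Set Site)) :
    fill C ⊆ lamBox l := by
  rintro x (hx | hfin)
  · exact hC hx
  · by_contra hx
    exact l1Comp_infinite_of_not_mem_lamBox (fun y hy hyC => hy (hC hyC)) hx hfin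

lemma mem_fill_iff_of_adj {C : Finset Site} {x y : Site} (hx : x ∉ C) (hy : y ∉ C)
    (hxy : d1 x y = 1) : x ∈ fill C ↔ y ∈ fill C := by
  simp [fill, hx, hy, l1Comp_eq_of_adj (S := (↑C)ᶜ) hx hy hxy]

lemma mem_of_mem_fill_of_not_mem_fill {C : Finset Site} {x y : Site} (hx : x ∈ fill C)
    (hy : y ∉ fill C) (hxy : d1 x y = 1) : x ∈ C := by
  by_contra hxC
  exact hy ((mem_fill_iff_of_adj hxC (fun h => hy (subset_fill C h)) hxy).1 hx)

section Cluster

variable {l : ℕ} {σ : Site → ℤ} {ε : ℤ} {C C' : Finset Site}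

lemma IsCluster.subset_lamBox (hC : IsCluster l σ ε C) : (↑C : Set Site) ⊆ ↑(lamBox l) :=
  fun x hx => (hC.2.1 x hx).1

lemma IsCluster.mem_of_adj (hC : IsCluster l σ ε C) {x y : Site} (hx : x ∈ C)
    (hy : y ∈ lamBox l) (hσy : σ y = ε) (hxy : d1 x y = 1) : y ∈ C :=
  hC.2.2.2 y hy hσy ⟨x, hx, hxy⟩

lemma IsCluster.subset_of_mem (hC : IsCluster l σ ε C) (hC' : IsCluster l σ ε C') {z : Site}
    (hz : z ∈ C) (hz' : z ∈ C') : C ⊆ C' := by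
  intro u hu
  obtain ⟨-, hzu⟩ := chainIn_iff.1 (hC.2.2.1 z hz u hu)
  clear hu
  induction hzu with
  | refl => exact hz'
  | tail _ hbc ih => exact hC'.mem_of_adj ih (hC.2.1 _ hbc.2.1).1 (hC.2.1 _ hbc.2.1).2 hbc.2.2

lemma IsCluster.eq_of_mem (hC : IsCluster l σ ε C) (hC' : IsCluster l σ ε C') {z : Site}
    (hz : z ∈ C) (hz' : z ∈ C') : C = C' :=
  (hC.subset_of_mem hC' hz hz').antisymm (hC'.subset_of_mem hC hz' hz)

end Cluster

def nbrPairs (Θ : Finset Site) (p : Site → Prop) [DecidablePred p] : Finset (Site × Site) :=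
  Θ.biUnion fun x => ((nbrs x).filter p).image (Prod.mk x)

@[simp]
lemma mem_nbrPairs {Θ : Finset Site} {p : Site → Prop} [DecidablePred p] {q : Site × Site} :
    q ∈ nbrPairs Θ p ↔ q.1 ∈ Θ ∧ q.2 ∈ nbrs q.1 ∧ p q.2 := by
  obtain ⟨x, y⟩ := q
  simp only [nbrPairs, Finset.mem_biUnion, Finset.mem_image, Finset.mem_filter, Prod.mk.injEq]
  constructor
  · rintro ⟨a, ha, b, ⟨hb, hp⟩, rfl, rfl⟩
    exact ⟨ha, hb, hp⟩
  · rintro ⟨hx, hy, hp⟩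
    exact ⟨x, hx, y, ⟨hy, hp⟩, rfl, rfl⟩

lemma sum_nbrPairs {M : Type*} [AddCommMonoid M] (Θ : Finset Site) (p : Site → Prop)
    [DecidablePred p] (f : Site × Site → M) :
    ∑ q ∈ nbrPairs Θ p, f q = ∑ x ∈ Θ, ∑ y ∈ (nbrs x).filter p, f (x, y) :=
  Finset.sum_finset_product _ _ _ fun q => by simp

noncomputable def bdryPairs (Θ : Finset Site) : Finset (Site × Site) := nbrPairs Θ (· ∉ Θ)

noncomputable def innerPairs (l : ℕ) (Θ : Finset Site) : Finset (Site × Site) :=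
  (bdryPairs Θ).filter (·.2 ∈ lamBox l)

noncomputable def exitPairs (l : ℕ) (Θ : Finset Site) : Finset (Site × Site) :=
  (bdryPairs Θ).filter (·.2 ∉ lamBox l)

lemma mem_bdryPairs {Θ : Finset Site} {q : Site × Site} :
    q ∈ bdryPairs Θ ↔ q.1 ∈ Θ ∧ q.2 ∈ nbrs q.1 ∧ q.2 ∉ Θ :=
  mem_nbrPairs

lemma mem_innerPairs {l : ℕ} {Θ : Finset Site} {q : Site × Site} :
    q ∈ innerPairs l Θ ↔ q.1 ∈ Θ ∧ q.2 ∈ nbrs q.1 ∧ q.2 ∉ Θ ∧ q.2 ∈ lamBox l := by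
  simp [innerPairs, mem_bdryPairs, and_assoc]

lemma mem_exitPairs {l : ℕ} {Θ : Finset Site} (hΘ : Θ ⊆ lamBox l) {q : Site × Site} :
    q ∈ exitPairs l Θ ↔ q.1 ∈ Θ ∧ q.2 ∈ nbrs q.1 ∧ q.2 ∉ lamBox l := by
  simp only [exitPairs, Finset.mem_filter, mem_bdryPairs]
  exact ⟨fun h => ⟨h.1.1, h.1.2.1, h.2⟩, fun h => ⟨⟨h.1, h.2.1, fun h' => h.2.2 (hΘ h')⟩, h.2.2⟩⟩

section Contour

variable {l : ℕ} {σ : Site → ℤ} {ε : ℤ} {Θ Θ' : Finset Site}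

lemma IsEContour.subset_lamBox (h : IsEContour l σ ε Θ) : Θ ⊆ lamBox l := by
  obtain ⟨C, hC, hΘ⟩ := h
  exact fun x hx => fill_subset_lamBox hC.subset_lamBox (hΘ ▸ hx)

lemma fst_mem_of_mem_bdryPairs {C Θ : Finset Site} (hΘ : (↑Θ : Set Site) = fill C)
    {q : Site × Site} (hq : q ∈ bdryPairs Θ) : q.1 ∈ C := by
  obtain ⟨h1, h2, h3⟩ := mem_bdryPairs.1 hq
  exact mem_of_mem_fill_of_not_mem_fill (hΘ ▸ h1) (hΘ ▸ h3) (d1_eq_one_of_mem_nbrs h2)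

lemma IsEContour.spin_eq_of_mem_bdryPairs (h : IsEContour l σ ε Θ) {q : Site × Site}
    (hq : q ∈ bdryPairs Θ) : σ q.1 = ε := by
  obtain ⟨C, hC, hΘ⟩ := h
  exact (hC.2.1 _ (fst_mem_of_mem_bdryPairs hΘ hq)).2

lemma IsEContour.spin_ne_of_mem_innerPairs (h : IsEContour l σ ε Θ) {q : Site × Site}
    (hq : q ∈ innerPairs l Θ) : σ q.2 ≠ ε := by
  obtain ⟨C, hC, hΘ⟩ := h
  obtain ⟨-, h2, h3, h4⟩ := mem_innerPairs.1 hq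
  have hxC := fst_mem_of_mem_bdryPairs hΘ (filter_subset _ _ hq)
  refine fun hσ => h3 ?_
  have : q.2 ∈ fill C := subset_fill C (hC.mem_of_adj hxC h4 hσ (d1_eq_one_of_mem_nbrs h2))
  rwa [← hΘ] at this

lemma IsEContour.spin_mul_eq_neg_one (hσ : ∀ x ∈ lamBox l, σ x = 1 ∨ σ x = -1)
    (hε : ε = 1 ∨ ε = -1) (h : IsEContour l σ ε Θ) {q : Site × Site} (hq : q ∈ innerPairs l Θ) :
    σ q.1 * σ q.2 = -1 := by
  have h1 := h.spin_eq_of_mem_bdryPairs (Finset.mem_filter.1 hq).1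
  have h2 := h.spin_ne_of_mem_innerPairs hq
  rcases hσ _ (mem_innerPairs.1 hq).2.2.2 with h3 | h3 <;> rcases hε with rfl | rfl <;>
    simp_all

/-- Flipping the spins of `Θ'` preserves the spin product across every boundary bond of `Θ`. -/
def Noninteracting (Θ Θ' : Finset Site) : Prop :=
  ∀ q ∈ bdryPairs Θ, (q.1 ∈ Θ' ↔ q.2 ∈ Θ')

lemma IsEContour.noninteracting (h : IsEContour l σ ε Θ) (h' : IsEContour l σ ε Θ')
    (hne : Θ ≠ Θ') : Noninteracting Θ Θ' := by
  obtain ⟨C, hC, hΘ⟩ := h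
  obtain ⟨C', hC', hΘ'⟩ := h'
  intro q hq
  obtain ⟨-, h2, h3⟩ := mem_bdryPairs.1 hq
  have hd := d1_eq_one_of_mem_nbrs h2
  have hy : q.2 ∉ fill C := hΘ ▸ h3
  have hxC := fst_mem_of_mem_bdryPairs hΘ hq
  have hxC' : q.1 ∉ C' := fun hx =>
    hne (Finset.coe_injective (by rw [hΘ, hΘ', hC.eq_of_mem hC' hxC hx]))
  have hyC' : q.2 ∉ C' := fun hy' =>
    hy (subset_fill C (hC.mem_of_adj hxC (hC'.2.1 _ hy').1 (hC'.2.1 _ hy').2 hd))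
  simpa only [← hΘ', Finset.mem_coe] using mem_fill_iff_of_adj hxC' hyC' hd

end Contour

section ContourCard

variable {l : ℕ} {Θ : Finset Site}

lemma contourOf_eq_image (Θ : Finset Site) :
    contourOf Θ = (bdryPairs Θ).image fun q => dualBond q.1 q.2 := by
  simp only [contourOf, bdryPairs, nbrPairs, Finset.biUnion_image, Finset.image_image]
  rfl

lemma injOn_dualBond_bdryPairs (Θ : Finset Site) :
    Set.InjOn (fun q : Site × Site => dualBond q.1 q.2) (bdryPairs Θ) := by
  intro q hq q' hq' he
  obtain ⟨h1, h2, -⟩ := mem_bdryPairs.1 hq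
  obtain ⟨-, h2', h3'⟩ := mem_bdryPairs.1 hq'
  rcases dualBond_eq_dualBond h2 h2' he with ⟨e1, e2⟩ | ⟨e1, -⟩
  · exact Prod.ext e1 e2
  · exact absurd (e1 ▸ h1) h3'

lemma card_contourOf (l : ℕ) (Θ : Finset Site) :
    #(contourOf Θ) = #(innerPairs l Θ) + #(exitPairs l Θ) := by
  rw [contourOf_eq_image, card_image_of_injOn (injOn_dualBond_bdryPairs Θ), innerPairs,
    exitPairs, card_filter_add_card_filter_not]

lemma contourOf_inter_boxBdry (hΘ : Θ ⊆ lamBox l) :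
    contourOf Θ ∩ boxBdry l = (exitPairs l Θ).image fun q => dualBond q.1 q.2 := by
  ext e
  simp only [Finset.mem_inter, boxBdry, contourOf_eq_image, Finset.mem_image]
  constructor
  · rintro ⟨⟨q, hq, rfl⟩, q', hq', he⟩
    obtain ⟨h1, h2, -⟩ := mem_bdryPairs.1 hq
    obtain ⟨-, h2', h3'⟩ := mem_bdryPairs.1 hq'
    refine ⟨q, Finset.mem_filter.2 ⟨hq, ?_⟩, rfl⟩
    rcases dualBond_eq_dualBond h2' h2 he with ⟨-, e⟩ | ⟨-, e⟩
    · exact e ▸ h3'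
    · exact absurd (hΘ h1) (e ▸ h3')
  · rintro ⟨q, hq, rfl⟩
    obtain ⟨h1, h2, h3⟩ := (mem_exitPairs hΘ).1 hq
    exact ⟨⟨q, (Finset.mem_filter.1 hq).1, rfl⟩, q, mem_bdryPairs.2 ⟨hΘ h1, h2, h3⟩, rfl⟩

lemma card_contourOf_inter_boxBdry (hΘ : Θ ⊆ lamBox l) :
    #(contourOf Θ ∩ boxBdry l) = #(exitPairs l Θ) := by
  rw [contourOf_inter_boxBdry hΘ]
  exact card_image_of_injOn ((injOn_dualBond_bdryPairs Θ).mono (filter_subset _ _))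

end ContourCard

lemma Int.exists_step_between (P : ℤ → Prop) {a c : ℤ} (hac : a ≤ c) (ha : P a) (hc : ¬ P c) :
    ∃ t, a ≤ t ∧ t < c ∧ P t ∧ ¬ P (t + 1) := by
  induction c, hac using Int.leInduction with
  | base => exact absurd ha hc
  | succ c hac ih =>
    by_cases h : P c
    · exact ⟨c, hac, by omega, h, hc⟩
    · obtain ⟨t, h1, h2, h3, h4⟩ := ih h
      exact ⟨t, h1, by omega, h3, h4⟩

section NonCrossing

variable {l : ℕ} {Θ : Finset Site}

lemma touches_of_exit (hΘ : Θ ⊆ lamBox l) {j : ℤ} {x y v : Site} (hx : x ∈ Θ) (hy : y ∈ nbrs x)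
    (hyl : y ∉ lamBox l) (hv : v ∈ dualBond x y) (hs : onSide l j v) :
    touches l j (contourOf Θ) := by
  refine ⟨_, ?_, v, hv, hs⟩
  rw [contourOf_eq_image]
  exact Finset.mem_image.2 ⟨(x, y), mem_bdryPairs.2 ⟨hx, hy, fun h => hyl (hΘ h)⟩, rfl⟩

lemma exists_free_column (hΘ : Θ ⊆ lamBox l) (hnc : ¬ HorizCrossing l (contourOf Θ)) :
    ∃ c, (c = lamLo l ∨ c = lamHi l) ∧ ∀ b, (c, b) ∉ Θ := by
  by_contra! H
  obtain ⟨b, hb⟩ := H (lamHi l) (.inr rfl)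
  obtain ⟨b', hb'⟩ := H (lamLo l) (.inl rfl)
  have := hΘ hb
  have := hΘ hb'
  simp only [mem_lamBox] at *
  exact hnc ⟨touches_of_exit hΘ hb (y := (lamHi l + 1, b)) (v := (lamHi l, b)) (by simp [nbrs])
      (by simp) (by simp [dualBond, eq_sub_iff_add_eq]) (by simp [onSide]; omega),
    touches_of_exit hΘ hb' (y := (lamLo l - 1, b')) (v := (lamLo l - 1, b')) (by simp [nbrs])
      (by simp) (by simp [dualBond, eq_sub_iff_add_eq]) (by simp [onSide]; omega)⟩

lemma exists_free_row (hΘ : Θ ⊆ lamBox l) (hnc : ¬ VertCrossing l (contourOf Θ)) :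
    ∃ r, (r = lamLo l ∨ r = lamHi l) ∧ ∀ a, (a, r) ∉ Θ := by
  by_contra! H
  obtain ⟨a, ha⟩ := H (lamHi l) (.inr rfl)
  obtain ⟨a', ha'⟩ := H (lamLo l) (.inl rfl)
  have := hΘ ha
  have := hΘ ha'
  simp only [mem_lamBox] at *
  exact hnc ⟨touches_of_exit hΘ ha (y := (a, lamHi l + 1)) (v := (a, lamHi l)) (by simp [nbrs])
      (by simp) (by simp [dualBond, eq_sub_iff_add_eq]) (by simp [onSide]; omega),
    touches_of_exit hΘ ha' (y := (a', lamLo l - 1)) (v := (a', lamLo l - 1)) (by simp [nbrs])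
      (by simp) (by simp [dualBond, eq_sub_iff_add_eq]) (by simp [onSide]; omega)⟩

lemma exists_innerPairs_row (hΘ : Θ ⊆ lamBox l) {a b c : ℤ} (ha : (a, b) ∈ Θ) (hc : (c, b) ∉ Θ)
    (hc₁ : lamLo l ≤ c) (hc₂ : c ≤ lamHi l) : ∃ s ∈ innerPairs l Θ, s.1.2 = b ∧ s.2.2 = b := by
  have := hΘ ha
  simp only [mem_lamBox] at this
  rcases le_total a c with hac | hca
  · obtain ⟨t, ht, ht', hP, hP'⟩ := Int.exists_step_between (fun t => (t, b) ∈ Θ) hac ha hc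
    exact ⟨((t, b), (t + 1, b)), mem_innerPairs.2 ⟨hP, by simp [nbrs], hP', by simp; omega⟩,
      rfl, rfl⟩
  · obtain ⟨t, ht, ht', hP, hP'⟩ := Int.exists_step_between (fun t => (t, b) ∉ Θ) hca hc (by simpa)
    exact ⟨((t + 1, b), (t, b)),
      mem_innerPairs.2 ⟨not_not.1 hP', by simp [nbrs], hP, by simp; omega⟩, rfl, rfl⟩

lemma exists_innerPairs_column (hΘ : Θ ⊆ lamBox l) {a b r : ℤ} (ha : (a, b) ∈ Θ)
    (hr : (a, r) ∉ Θ) (hr₁ : lamLo l ≤ r) (hr₂ : r ≤ lamHi l) :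
    ∃ s ∈ innerPairs l Θ, s.1.1 = a ∧ s.2.1 = a := by
  have := hΘ ha
  simp only [mem_lamBox] at this
  rcases le_total b r with hbr | hrb
  · obtain ⟨t, ht, ht', hP, hP'⟩ := Int.exists_step_between (fun t => (a, t) ∈ Θ) hbr ha hr
    exact ⟨((a, t), (a, t + 1)), mem_innerPairs.2 ⟨hP, by simp [nbrs], hP', by simp; omega⟩,
      rfl, rfl⟩
  · obtain ⟨t, ht, ht', hP, hP'⟩ := Int.exists_step_between (fun t => (a, t) ∉ Θ) hrb hr (by simpa)
    exact ⟨((a, t + 1), (a, t)),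
      mem_innerPairs.2 ⟨not_not.1 hP', by simp [nbrs], hP, by simp; omega⟩, rfl, rfl⟩

lemma exitPairs_cases (hΘ : Θ ⊆ lamBox l) {q : Site × Site}
    (hq : q ∈ exitPairs l Θ) :
    (q.2.2 = q.1.2 ∧
        (q.1.1 = lamLo l ∧ q.2.1 = lamLo l - 1 ∨ q.1.1 = lamHi l ∧ q.2.1 = lamHi l + 1)) ∨
      (q.2.1 = q.1.1 ∧
        (q.1.2 = lamLo l ∧ q.2.2 = lamLo l - 1 ∨ q.1.2 = lamHi l ∧ q.2.2 = lamHi l + 1)) := by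
  obtain ⟨h1, h2, h3⟩ := (mem_exitPairs hΘ).1 hq
  have h1 := hΘ h1
  simp only [mem_nbrs, mem_lamBox, Prod.ext_iff] at h1 h2 h3
  omega

lemma exists_innerPairs_aligned_of_mem_exitPairs (hΘ : Θ ⊆ lamBox l) {c r : ℤ}
    (hc : c = lamLo l ∨ c = lamHi l) (hcΘ : ∀ b, (c, b) ∉ Θ)
    (hr : r = lamLo l ∨ r = lamHi l) (hrΘ : ∀ a, (a, r) ∉ Θ) {q : Site × Site}
    (hq : q ∈ exitPairs l Θ) : ∃ s ∈ innerPairs l Θ,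
      (q.2.2 = q.1.2 ∧ s.1.2 = q.1.2 ∧ s.2.2 = q.1.2) ∨
        (q.2.1 = q.1.1 ∧ s.1.1 = q.1.1 ∧ s.2.1 = q.1.1) := by
  have h1 := ((mem_exitPairs hΘ).1 hq).1
  have := hΘ h1
  simp only [mem_lamBox] at this
  rcases exitPairs_cases hΘ hq with ⟨hh, -⟩ | ⟨hv, -⟩
  · obtain ⟨s, hs, hs'⟩ := exists_innerPairs_row hΘ h1 (hcΘ q.1.2) (by omega) (by omega)
    exact ⟨s, hs, .inl ⟨hh, hs'⟩⟩
  · obtain ⟨s, hs, hs'⟩ := exists_innerPairs_column hΘ h1 (hrΘ q.1.1) (by omega) (by omega)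
    exact ⟨s, hs, .inr ⟨hv, hs'⟩⟩

lemma card_exitPairs_le_card_innerPairs (hΘ : Θ ⊆ lamBox l)
    (hnc : NonCrossing l (contourOf Θ)) : #(exitPairs l Θ) ≤ #(innerPairs l Θ) := by
  obtain ⟨c, hc, hcΘ⟩ := exists_free_column hΘ fun h => hnc (.inl h)
  obtain ⟨r, hr, hrΘ⟩ := exists_free_row hΘ fun h => hnc (.inr h)
  choose! f hf using fun q (hq : q ∈ exitPairs l Θ) =>
    exists_innerPairs_aligned_of_mem_exitPairs hΘ hc hcΘ hr hrΘ hq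
  -- `f` is injective since no exit leaves through the free column or the free row.
  refine card_le_card_of_injOn f (fun q hq => (hf q hq).1) fun q hq q' hq' he => ?_
  have hfree : ∀ q ∈ exitPairs l Θ, q.1.1 ≠ c ∧ q.1.2 ≠ r := fun q hq => by
    have h1 := ((mem_exitPairs hΘ).1 hq).1
    exact ⟨fun h => hcΘ q.1.2 (h ▸ h1), fun h => hrΘ q.1.1 (h ▸ h1)⟩
  obtain ⟨hs, hm⟩ := hf q hq
  obtain ⟨-, hm'⟩ := hf q' hq'
  rw [he] at hs hm
  have hsn := (mem_innerPairs.1 hs).2.1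
  simp only [mem_nbrs, Prod.ext_iff] at hsn
  have := exitPairs_cases hΘ hq
  have := exitPairs_cases hΘ hq'
  have := hfree q hq
  have := hfree q' hq'
  rcases hm with ⟨h, e1, e2⟩ | ⟨h, e1, e2⟩ <;> rcases hm' with ⟨h', e1', e2'⟩ | ⟨h', e1', e2'⟩
  · exact Prod.ext (Prod.ext (by omega) (by omega)) (Prod.ext (by omega) (by omega))
  · exfalso; omega
  · exfalso; omega
  · exact Prod.ext (Prod.ext (by omega) (by omega)) (Prod.ext (by omega) (by omega))

end NonCrossing

lemma Ham_eq_sum_nbrPairs (l : ℕ) (ω : Site → ℝ) (τ : Site → ℤ) :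
    Ham l ω τ = -(1/2) * ∑ q ∈ nbrPairs (lamBox l) (· ∈ lamBox l), ((τ q.1 * τ q.2 : ℤ) : ℝ)
      - ∑ q ∈ nbrPairs (lamBox l) (· ∉ lamBox l), (τ q.1 : ℝ) * ω q.2 := by
  simp only [Ham, sum_nbrPairs]

lemma sum_nbrPairs_lamBox_swap (l : ℕ) (f : Site × Site → ℝ) :
    ∑ q ∈ nbrPairs (lamBox l) (· ∈ lamBox l), f q =
      ∑ q ∈ nbrPairs (lamBox l) (· ∈ lamBox l), f q.swap :=
  Finset.sum_equiv (Equiv.prodComm _ _) (fun q => by simp [mem_nbrs_comm (x := q.1)]; tauto)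
    (fun q _ => by simp)

section Energy

variable {l : ℕ} {ω : Site → ℝ} {Θ : Finset Site}

lemma sum_nbrPairs_lamBox_flipC (hΘ : Θ ⊆ lamBox l) (τ : Site → ℤ) :
    ∑ q ∈ nbrPairs (lamBox l) (· ∈ lamBox l), ((flipC Θ τ q.1 * flipC Θ τ q.2 : ℤ) : ℝ) =
      ∑ q ∈ nbrPairs (lamBox l) (· ∈ lamBox l), ((τ q.1 * τ q.2 : ℤ) : ℝ)
        - 4 * ∑ q ∈ innerPairs l Θ, ((τ q.1 * τ q.2 : ℤ) : ℝ) := by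
  set B := nbrPairs (lamBox l) (· ∈ lamBox l)
  have hB : B.filter (fun q => q.1 ∈ Θ ∧ q.2 ∉ Θ) = innerPairs l Θ := by
    ext q
    simp only [B, mem_filter, mem_nbrPairs, mem_innerPairs]
    exact ⟨fun h => ⟨h.2.1, h.1.2.1, h.2.2, h.1.2.2⟩,
      fun h => ⟨⟨hΘ h.1, h.2.1, h.2.2.2⟩, h.1, h.2.2.1⟩⟩
  have key : ∀ q : Site × Site, ((flipC Θ τ q.1 * flipC Θ τ q.2 : ℤ) : ℝ) =
      ((τ q.1 * τ q.2 : ℤ) : ℝ) - 2 * (if q.1 ∈ Θ ∧ q.2 ∉ Θ then ((τ q.1 * τ q.2 : ℤ) : ℝ) else 0)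
        - 2 * (if q.2 ∈ Θ ∧ q.1 ∉ Θ then ((τ q.2 * τ q.1 : ℤ) : ℝ) else 0) := by
    intro q
    by_cases h1 : q.1 ∈ Θ <;> by_cases h2 : q.2 ∈ Θ <;> simp [flipC, h1, h2] <;> ring
  -- Every inner bond occurs in `B` in both orientations.
  have hswap : ∑ q ∈ B, (if q.2 ∈ Θ ∧ q.1 ∉ Θ then ((τ q.2 * τ q.1 : ℤ) : ℝ) else 0) =
      ∑ q ∈ B, (if q.1 ∈ Θ ∧ q.2 ∉ Θ then ((τ q.1 * τ q.2 : ℤ) : ℝ) else 0) :=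
    sum_nbrPairs_lamBox_swap l _
  simp only [key, sum_sub_distrib, ← mul_sum, hswap, ← sum_filter, hB]
  ring

lemma sum_nbrPairs_compl_lamBox_flipC (hΘ : Θ ⊆ lamBox l) (τ : Site → ℤ) :
    ∑ q ∈ nbrPairs (lamBox l) (· ∉ lamBox l), ((flipC Θ τ q.1 : ℤ) : ℝ) * ω q.2 =
      ∑ q ∈ nbrPairs (lamBox l) (· ∉ lamBox l), (τ q.1 : ℝ) * ω q.2
        - 2 * ∑ q ∈ exitPairs l Θ, (τ q.1 : ℝ) * ω q.2 := by
  have hE : (nbrPairs (lamBox l) (· ∉ lamBox l)).filter (·.1 ∈ Θ) = exitPairs l Θ := by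
    ext q
    simp only [mem_filter, mem_nbrPairs, mem_exitPairs hΘ]
    exact ⟨fun h => ⟨h.2, h.1.2⟩, fun h => ⟨⟨hΘ h.1, h.2⟩, h.1⟩⟩
  have key : ∀ q : Site × Site, ((flipC Θ τ q.1 : ℤ) : ℝ) * ω q.2 =
      (τ q.1 : ℝ) * ω q.2 - 2 * (if q.1 ∈ Θ then (τ q.1 : ℝ) * ω q.2 else 0) := by
    intro q
    by_cases h : q.1 ∈ Θ
    · simp [flipC, h]; ring
    · simp [flipC, h]
  simp only [key, sum_sub_distrib, ← mul_sum, ← sum_filter, hE]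

lemma dH_singleton (hΘ : Θ ⊆ lamBox l) (τ : Site → ℤ) :
    dH l ω [Θ] τ = -2 * ∑ q ∈ innerPairs l Θ, ((τ q.1 * τ q.2 : ℤ) : ℝ)
      - 2 * ∑ q ∈ exitPairs l Θ, (τ q.1 : ℝ) * ω q.2 := by
  rw [dH, List.foldr_cons, List.foldr_nil, Ham_eq_sum_nbrPairs, Ham_eq_sum_nbrPairs,
    sum_nbrPairs_lamBox_flipC hΘ, sum_nbrPairs_compl_lamBox_flipC hΘ]
  ring

end Energy

section Telescoping

variable {l : ℕ} {ω : Site → ℝ} {σ : Site → ℤ}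

lemma foldr_flipC_mul {L : List (Finset Site)} {x y : Site} (h : ∀ Θ ∈ L, (x ∈ Θ ↔ y ∈ Θ))
    (τ : Site → ℤ) : L.foldr flipC τ x * L.foldr flipC τ y = τ x * τ y := by
  induction L with
  | nil => rfl
  | cons Θ L ih =>
    have hxy := h Θ List.mem_cons_self
    have ih := ih fun Θ' hΘ' => h Θ' (List.mem_cons_of_mem _ hΘ')
    by_cases hx : x ∈ Θ
    · simpa [flipC, hx, hxy.1 hx] using ih
    · simpa [flipC, hx, mt hxy.2 hx] using ih

lemma foldr_flipC_of_forall_not_mem {L : List (Finset Site)} {x : Site} (h : ∀ Θ ∈ L, x ∉ Θ)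
    (τ : Site → ℤ) : L.foldr flipC τ x = τ x := by
  induction L with
  | nil => rfl
  | cons Θ L ih =>
    simpa [flipC, h Θ List.mem_cons_self] using ih fun Θ' hΘ' => h Θ' (List.mem_cons_of_mem _ hΘ')

lemma dH_cons (Θ : Finset Site) (L : List (Finset Site)) :
    dH l ω (Θ :: L) σ = dH l ω L σ + dH l ω [Θ] (L.foldr flipC σ) := by
  simp only [dH, List.foldr_cons, List.foldr_nil]
  ring

lemma dH_singleton_foldr_flipC {Θ : Finset Site} {L : List (Finset Site)} (hΘ : Θ ⊆ lamBox l)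
    (hsub : ∀ Θ' ∈ L, Θ' ⊆ lamBox l) (hL : ∀ Θ' ∈ L, Noninteracting Θ Θ') :
    dH l ω [Θ] (L.foldr flipC σ) = dH l ω [Θ] σ := by
  have hinner : ∀ q ∈ innerPairs l Θ, L.foldr flipC σ q.1 * L.foldr flipC σ q.2 = σ q.1 * σ q.2 :=
    fun q hq => foldr_flipC_mul (fun Θ' h => hL Θ' h q (filter_subset _ _ hq)) σ
  have hexit : ∀ q ∈ exitPairs l Θ, L.foldr flipC σ q.1 = σ q.1 := by
    refine fun q hq => foldr_flipC_of_forall_not_mem (fun Θ' h hx => ?_) σ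
    exact ((mem_exitPairs hΘ).1 hq).2.2 (hsub Θ' h ((hL Θ' h q (filter_subset _ _ hq)).1 hx))
  rw [dH_singleton hΘ, dH_singleton hΘ]
  congr 2
  · exact sum_congr rfl fun q hq => by rw [hinner q hq]
  · exact sum_congr rfl fun q hq => by rw [hexit q hq]

lemma dH_eq_sum_dH_singleton {L : List (Finset Site)} (hsub : ∀ Θ ∈ L, Θ ⊆ lamBox l)
    (hL : L.Pairwise Noninteracting) : dH l ω L σ = (L.map fun Θ => dH l ω [Θ] σ).sum := by
  induction L with
  | nil => simp [dH]
  | cons Θ L ih =>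
    rw [List.pairwise_cons] at hL
    have hsub' : ∀ Θ' ∈ L, Θ' ⊆ lamBox l := fun Θ' h => hsub Θ' (List.mem_cons_of_mem _ h)
    rw [dH_cons, ih hsub' hL.2, dH_singleton_foldr_flipC (hsub Θ List.mem_cons_self) hsub' hL.1,
      List.map_cons, List.sum_cons, add_comm]

lemma dH_take_ofFn {ε : ℤ} {m : ℕ} {Θs : Fin m → Finset Site}
    (hcs : ∀ j, IsEContour l σ ε (Θs j)) (hinj : Function.Injective Θs) (n : ℕ) :
    dH l ω ((List.ofFn Θs).take n) σ =
      ∑ j ∈ univ.filter (fun j : Fin m => (j : ℕ) < n), dH l ω [Θs j] σ := by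
  have hsub : ∀ Θ ∈ List.ofFn Θs, Θ ⊆ lamBox l := by
    simpa [List.mem_ofFn] using fun j => (hcs j).subset_lamBox
  have hpair : (List.ofFn Θs).Pairwise Noninteracting :=
    List.pairwise_ofFn.2 fun i j hij => (hcs i).noninteracting (hcs j) (hinj.ne hij.ne)
  rw [dH_eq_sum_dH_singleton (fun Θ h => hsub Θ (List.mem_of_mem_take h))
    (hpair.sublist (List.take_sublist _ _)), List.map_take, List.map_ofFn, List.sum_take_ofFn]
  rfl

end Telescoping

section ContourEnergy

variable {l : ℕ} {σ : Site → ℤ} {ε : ℤ} {ω : Site → ℝ} {Θ : Finset Site}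

lemma card_innerPairs_sub_card_exitPairs_le_half_dH (hσ : ∀ x ∈ lamBox l, σ x = 1 ∨ σ x = -1)
    (hε : ε = 1 ∨ ε = -1) (hω : ∀ y ∈ extBdry l, |ω y| ≤ 1) (h : IsEContour l σ ε Θ) :
    (#(innerPairs l Θ) : ℝ) - #(exitPairs l Θ) ≤ (1/2) * dH l ω [Θ] σ := by
  have hΘ := h.subset_lamBox
  have hinner : ∑ q ∈ innerPairs l Θ, ((σ q.1 * σ q.2 : ℤ) : ℝ) = -#(innerPairs l Θ) := by
    rw [sum_congr rfl fun q hq => by rw [h.spin_mul_eq_neg_one hσ hε hq]]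
    simp
  have hexit : ∑ q ∈ exitPairs l Θ, (σ q.1 : ℝ) * ω q.2 ≤ #(exitPairs l Θ) := by
    refine (sum_le_card_nsmul _ _ 1 fun q hq => ?_).trans (by simp)
    obtain ⟨h1, h2, h3⟩ := (mem_exitPairs hΘ).1 hq
    have hω' := abs_le.1 (hω q.2 ⟨h3, q.1, hΘ h1, d1_eq_one_of_mem_nbrs h2⟩)
    rw [h.spin_eq_of_mem_bdryPairs (filter_subset _ _ hq)]
    rcases hε with rfl | rfl <;> simp <;> linarith
  rw [dH_singleton hΘ, hinner]
  linarith

lemma half_card_contourOf_sub_card_inter_boxBdry_nonneg (hΘ : Θ ⊆ lamBox l)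
    (hnc : NonCrossing l (contourOf Θ)) :
    0 ≤ (1/2 : ℝ) * #(contourOf Θ) - #(contourOf Θ ∩ boxBdry l) := by
  have h : (#(exitPairs l Θ) : ℝ) ≤ #(innerPairs l Θ) := by
    exact_mod_cast card_exitPairs_le_card_innerPairs hΘ hnc
  rw [card_contourOf l, card_contourOf_inter_boxBdry hΘ]
  push_cast
  linarith

lemma half_card_contourOf_sub_card_inter_boxBdry_le_half_dH
    (hσ : ∀ x ∈ lamBox l, σ x = 1 ∨ σ x = -1) (hε : ε = 1 ∨ ε = -1)
    (hω : ∀ y ∈ extBdry l, |ω y| ≤ 1) (h : IsEContour l σ ε Θ)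
    (hnc : NonCrossing l (contourOf Θ)) :
    (1/2 : ℝ) * #(contourOf Θ) - #(contourOf Θ ∩ boxBdry l) ≤ (1/2) * dH l ω [Θ] σ := by
  have hΘ := h.subset_lamBox
  have h1 := card_innerPairs_sub_card_exitPairs_le_half_dH hσ hε hω h
  have h2 : (#(exitPairs l Θ) : ℝ) ≤ #(innerPairs l Θ) := by
    exact_mod_cast card_exitPairs_le_card_innerPairs hΘ hnc
  rw [card_contourOf l, card_contourOf_inter_boxBdry hΘ]
  push_cast
  linarith

end ContourEnergy

theorem stmt15_general (l : ℕ) (σ : Site → ℤ) (hσ : ∀ x ∈ lamBox l, σ x = 1 ∨ σ x = -1)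
    (ε : ℤ) (hε : ε = 1 ∨ ε = -1) (ω : Site → ℝ)
    (hω : ∀ y ∈ extBdry l, |ω y| ≤ 1)
    (m : ℕ) (Θs : Fin m → Finset Site)
    (hcs : ∀ j, IsEContour l σ ε (Θs j)) (hinj : Function.Injective Θs)
    (hnc : ∀ j, NonCrossing l (contourOf (Θs j)))
    (p : ℕ) :
    (1/2 : ℝ) * dH l ω (List.ofFn Θs) σ ≥
        (1/2) * dH l ω ((List.ofFn Θs).take p) σ +
          ∑ j ∈ Finset.univ.filter (fun j : Fin m => p ≤ (j : ℕ)),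
            ((1/2) * ((contourOf (Θs j)).card : ℝ) -
              ((contourOf (Θs j) ∩ boxBdry l).card : ℝ)) ∧
      (1/2 : ℝ) * dH l ω ((List.ofFn Θs).take p) σ +
          ∑ j ∈ Finset.univ.filter (fun j : Fin m => p ≤ (j : ℕ)),
            ((1/2) * ((contourOf (Θs j)).card : ℝ) -
              ((contourOf (Θs j) ∩ boxBdry l).card : ℝ)) ≥
        (1/2) * dH l ω ((List.ofFn Θs).take p) σ ∧
      (0 : ℝ) ≤ (1/2) * dH l ω ((List.ofFn Θs).take p) σ := by
  have hall : dH l ω (List.ofFn Θs) σ = ∑ j, dH l ω [Θs j] σ := by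
    simpa [List.take_of_length_le] using dH_take_ofFn (ω := ω) hcs hinj m
  have hsplit := sum_filter_add_sum_filter_not univ (fun j : Fin m => (j : ℕ) < p)
    fun j => dH l ω [Θs j] σ
  simp only [not_lt] at hsplit
  have hle := fun j =>
    half_card_contourOf_sub_card_inter_boxBdry_le_half_dH hσ hε hω (hcs j) (hnc j)
  have hnonneg := fun j =>
    half_card_contourOf_sub_card_inter_boxBdry_nonneg (hcs j).subset_lamBox (hnc j)
  have hrest := sum_le_sum fun j (_ : j ∈ univ.filter (fun j : Fin m => p ≤ (j : ℕ))) => hle j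
  have hrest₀ := sum_nonneg fun j (_ : j ∈ univ.filter (fun j : Fin m => p ≤ (j : ℕ))) => hnonneg j
  have hfirst₀ := sum_nonneg fun j (_ : j ∈ univ.filter (fun j : Fin m => (j : ℕ) < p)) =>
    (hnonneg j).trans (hle j)
  rw [← mul_sum] at hrest hfirst₀
  rw [hall, dH_take_ofFn hcs hinj, ← hsplit]
  exact ⟨by linarith, by linarith, hfirst₀⟩

/-- For non-crossing (ε)-contours `γ₁,…,γ_m` at `σ` in `Λ(l)` and
`0 ≤ p ≤ m`: `(1/2)Δ_{γ₁,…,γ_m}H^ω(σ) ≥ (1/2)Δ_{γ₁,…,γ_p}H^ω(σ)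
+ ∑_{j=p+1}^m ((1/2)|γ_j| - |γ_j ∩ ∂Q(Λ(l))|) ≥ (1/2)Δ_{γ₁,…,γ_p}H^ω(σ) ≥ 0`. -/
theorem stmt15 (l : ℕ) (σ : Site → ℤ) (hσ : ∀ x ∈ lamBox l, σ x = 1 ∨ σ x = -1)
    (ε : ℤ) (hε : ε = 1 ∨ ε = -1) (ω : Site → ℝ)
    (hω : ∀ y ∈ extBdry l, |ω y| ≤ 1)
    (m : ℕ) (Θs : Fin m → Finset Site)
    (hcs : ∀ j, IsEContour l σ ε (Θs j)) (hinj : Function.Injective Θs)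
    (hnc : ∀ j, NonCrossing l (contourOf (Θs j)))
    (p : ℕ) (hp : p ≤ m) :
    (1/2 : ℝ) * dH l ω (List.ofFn Θs) σ ≥
        (1/2) * dH l ω ((List.ofFn Θs).take p) σ +
          ∑ j ∈ Finset.univ.filter (fun j : Fin m => p ≤ (j : ℕ)),
            ((1/2) * ((contourOf (Θs j)).card : ℝ) -
              ((contourOf (Θs j) ∩ boxBdry l).card : ℝ)) ∧
      (1/2 : ℝ) * dH l ω ((List.ofFn Θs).take p) σ +
          ∑ j ∈ Finset.univ.filter (fun j : Fin m => p ≤ (j : ℕ)),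
            ((1/2) * ((contourOf (Θs j)).card : ℝ) -
              ((contourOf (Θs j) ∩ boxBdry l).card : ℝ)) ≥
        (1/2) * dH l ω ((List.ofFn Θs).take p) σ ∧
      (0 : ℝ) ≤ (1/2) * dH l ω ((List.ofFn Θs).take p) σ :=
  stmt15_general l σ hσ ε hε ω hω m Θs hcs hinj hnc p
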